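/- Let V = ℂ³ with basis {h | v₁, v₂} (h even; v₁, v₂ odd), bracket [v₁,v₂] = h, and α the even map with α(h) = μ₁₂μ₂₁ h, α(v₁) = μ₂₁ v₂, α(v₂) = μ₁₂ v₁ (off-diagonal on the odd part), μ₁₂μ₂₁ ≠ 0, μ₁₂μ₂₁ ≠ 1. Then: (i) (V,[·,·],α) is a multiplicative Hom-Lie superalgebra; (ii) every even 1-cocycle is a multiple of the map ψ₀ with ψ₀(h) = 2h, ψ₀(v₁) = v₁, ψ₀(v₂) = v₂, plus a coboundary; hence dim H¹(g,g) = 1. -/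

import Mathlib

/-!
The bracket is symmetric with values in the centre `ℂh`, so every double bracket vanishes and the
Hom-Jacobi identity is trivial. `ψ₀` is an ordinary derivation, and for an even derivation the
cocycle expression `δ¹ψ(x, y)` reduces to `-(1 + (-1)^{|x||y|}) [ψx, y]`, which vanishes on
homogeneous arguments. Conversely, if `ψ` is an even cocycle, `δ¹ψ(vᵢ, vᵢ) = 0` makes `ψ` diagonal on
the odd part, `δ¹ψ(v₁, v₂) = 0` gives `ψ(h) = (a₁ + a₂) h`, and `ψα = αψ` at `v₁` gives
`μ₂₁ a₁ = μ₂₁ a₂`, so `ψ = a₁ ψ₀`. Finally `ψ₀` is not a coboundary, since every `δ⁰z` kills `h`.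
-/

namespace Stmt16

/-- V = ℂ³ with basis h = e₀ (even), v₁ = e₁, v₂ = e₂ (odd). -/
abbrev V : Type := Fin 3 → ℂ

def hom (p : Bool) (x : V) : Prop := if p then x 0 = 0 else (x 1 = 0 ∧ x 2 = 0)

def sg (b : Bool) : ℂ := if b then -1 else 1

/-- bracket: [v₁,v₂] = [v₂,v₁] = h, others zero. -/
def br (x y : V) : V := ![x 1 * y 2 + x 2 * y 1, 0, 0]

/-- α(h) = μ₁₂μ₂₁·h, α(v₁) = μ₂₁·v₂, α(v₂) = μ₁₂·v₁. -/
def al (μ12 μ21 : ℂ) (x : V) : V := ![μ12 * μ21 * x 0, μ12 * x 2, μ21 * x 1]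

def IsLin (f : V → V) : Prop := ∀ (c : ℂ) (x y : V), f (c • x + y) = c • f x + f y

def IsEven (f : V → V) : Prop := ∀ (p : Bool) (x : V), hom p x → hom p (f x)

/-- the representative even 1-cocycle ψ₀ : h ↦ 2h, v₁ ↦ v₁, v₂ ↦ v₂. -/
def ψ0 (x : V) : V := ![2 * x 0, x 1, x 2]

/-- coboundary of a 0-cochain z ∈ C⁰_α: δ⁰z(y) = -[y,z]. -/
def D0 (z : V) (y : V) : V := -(br y z)

/-- δ¹ψ on homogeneous x, y for an even ψ. -/
def d1 (ψ : V → V) (px py : Bool) (x y : V) : V :=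
  -(ψ (br x y)) + br x (ψ y) - sg (py && px) • br y (ψ x)

local notation "𝐡" => (Pi.single 0 1 : V)
local notation "𝐯₁" => (Pi.single 1 1 : V)
local notation "𝐯₂" => (Pi.single 2 1 : V)

theorem br_comm (x y : V) : br x y = br y x := by
  simp only [br]; ring_nf

theorem br_br_eq_zero (x y z : V) : br x (br y z) = 0 := by
  funext i; fin_cases i <;> simp [br]

theorem br_eq_zero_of_hom_false {x : V} (hx : hom false x) (y : V) : br x y = 0 := by
  simp only [hom, Bool.false_eq_true, ↓reduceIte] at hx
  funext i; fin_cases i <;> simp [br, hx.1, hx.2]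

theorem al_br (μ12 μ21 : ℂ) (x y : V) :
    al μ12 μ21 (br x y) = br (al μ12 μ21 x) (al μ12 μ21 y) := by
  funext i; fin_cases i <;> simp [al, br]; ring

theorem hom_jacobi (μ12 μ21 : ℂ) (px py pz : Bool) (x y z : V) :
    sg (px && pz) • br (al μ12 μ21 x) (br y z)
      + sg (py && px) • br (al μ12 μ21 y) (br z x)
      + sg (pz && py) • br (al μ12 μ21 z) (br x y) = 0 := by
  simp only [br_br_eq_zero, smul_zero, add_zero]

def IsCocycle (ψ : V → V) : Prop :=
  ∀ (px py : Bool) (x y : V), hom px x → hom py y → d1 ψ px py x y = 0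

theorem d1_eq_of_derivation {ψ : V → V} (hψ : ∀ x y, ψ (br x y) = br (ψ x) y + br x (ψ y))
    (px py : Bool) (x y : V) : d1 ψ px py x y = -((1 + sg (py && px)) • br (ψ x) y) := by
  rw [d1, hψ, br_comm y]
  module

theorem IsCocycle.of_derivation {ψ : V → V} (heven : IsEven ψ)
    (hψ : ∀ x y, ψ (br x y) = br (ψ x) y + br x (ψ y)) : IsCocycle ψ := by
  intro px py x y hx hy
  rw [d1_eq_of_derivation hψ]
  cases px with
  | false => rw [br_eq_zero_of_hom_false (heven false x hx), smul_zero, neg_zero]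
  | true =>
    cases py with
    | false => rw [br_comm, br_eq_zero_of_hom_false hy, smul_zero, neg_zero]
    | true => simp [sg]

theorem isLin_ψ0 : IsLin ψ0 := by
  intro c x y
  funext i; fin_cases i <;> simp [ψ0]; ring

theorem isEven_ψ0 : IsEven ψ0 := by
  rintro (_ | _) x hx <;> simpa [hom, ψ0] using hx

theorem al_ψ0 (μ12 μ21 : ℂ) (x : V) : al μ12 μ21 (ψ0 x) = ψ0 (al μ12 μ21 x) := by
  funext i; fin_cases i <;> simp [al, ψ0]; ring

theorem ψ0_br (x y : V) : ψ0 (br x y) = br (ψ0 x) y + br x (ψ0 y) := by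
  funext i; fin_cases i <;> simp [ψ0, br]; ring

theorem isCocycle_ψ0 : IsCocycle ψ0 :=
  .of_derivation isEven_ψ0 ψ0_br

theorem ψ0_ne_D0 (z : V) : ψ0 ≠ D0 z := by
  intro h
  have := congrFun (congrFun h 𝐡) 0
  simp [ψ0, D0, br] at this

theorem D0_zero : D0 0 = 0 := by
  funext y i; fin_cases i <;> simp [D0, br]

theorem IsLin.map_zero {ψ : V → V} (hψ : IsLin ψ) : ψ 0 = 0 := by
  simpa using hψ 1 0 0

theorem IsLin.map_smul {ψ : V → V} (hψ : IsLin ψ) (c : ℂ) (x : V) : ψ (c • x) = c • ψ x := by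
  simpa [hψ.map_zero] using hψ c x 0

def IsLin.toLinearMap {ψ : V → V} (hψ : IsLin ψ) : V →ₗ[ℂ] V where
  toFun := ψ
  map_add' x y := by simpa using hψ 1 x y
  map_smul' := hψ.map_smul

theorem br_v₁ (y : V) : br 𝐯₁ y = y 2 • 𝐡 := by
  funext i; fin_cases i <;> simp [br]

theorem br_v₂ (y : V) : br 𝐯₂ y = y 1 • 𝐡 := by
  funext i; fin_cases i <;> simp [br]

theorem IsCocycle.apply_v₁_two {ψ : V → V} (hlin : IsLin ψ) (hψ : IsCocycle ψ) : ψ 𝐯₁ 2 = 0 := by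
  have := congrFun (hψ true true 𝐯₁ 𝐯₁ (by simp [hom]) (by simp [hom])) 0
  simpa [d1, sg, br_v₁, hlin.map_zero] using this

theorem IsCocycle.apply_v₂_one {ψ : V → V} (hlin : IsLin ψ) (hψ : IsCocycle ψ) : ψ 𝐯₂ 1 = 0 := by
  have := congrFun (hψ true true 𝐯₂ 𝐯₂ (by simp [hom]) (by simp [hom])) 0
  simpa [d1, sg, br_v₂, hlin.map_zero] using this

theorem IsCocycle.apply_h_zero {ψ : V → V} (hψ : IsCocycle ψ) : ψ 𝐡 0 = ψ 𝐯₁ 1 + ψ 𝐯₂ 2 := by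
  have := congrFun (hψ true true 𝐯₁ 𝐯₂ (by simp [hom]) (by simp [hom])) 0
  simp [d1, sg, br_v₁, br_v₂] at this
  linear_combination -this

theorem apply_v₂_two_eq_of_commute {μ12 μ21 : ℂ} (hμ : μ21 ≠ 0) {ψ : V → V} (hlin : IsLin ψ)
    (hcomm : ∀ x, al μ12 μ21 (ψ x) = ψ (al μ12 μ21 x)) : ψ 𝐯₂ 2 = ψ 𝐯₁ 1 := by
  have hα : al μ12 μ21 𝐯₁ = μ21 • 𝐯₂ := by
    funext i; fin_cases i <;> simp [al]
  have := congrFun (hcomm 𝐯₁) 2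
  rw [hα, hlin.map_smul] at this
  simpa [al, hμ] using this.symm

theorem eq_smul_ψ0_of_isCocycle {μ12 μ21 : ℂ} (hμ : μ21 ≠ 0) {ψ : V → V} (hlin : IsLin ψ)
    (heven : IsEven ψ) (hcomm : ∀ x, al μ12 μ21 (ψ x) = ψ (al μ12 μ21 x)) (hψ : IsCocycle ψ) :
    ψ = ψ 𝐯₁ 1 • ψ0 := by
  have hh := heven false 𝐡 (by simp [hom])
  have h₁ := heven true 𝐯₁ (by simp [hom])
  have h₂ := heven true 𝐯₂ (by simp [hom])
  simp only [hom, Bool.false_eq_true, ↓reduceIte] at hh h₁ h₂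
  have heq : hlin.toLinearMap = ψ 𝐯₁ 1 • isLin_ψ0.toLinearMap :=
    (Pi.basisFun ℂ (Fin 3)).ext fun i => by
      fin_cases i <;> funext j <;> fin_cases j <;>
        simp [IsLin.toLinearMap, ψ0, hh, h₁, h₂, mul_two,
          hψ.apply_v₁_two hlin, hψ.apply_v₂_one hlin, hψ.apply_h_zero,
          apply_v₂_two_eq_of_commute hμ hlin hcomm]
  exact congrArg (⇑) heq

theorem stmt16_general (μ12 μ21 : ℂ) (h1 : μ12 * μ21 ≠ 0) :
    -- (i) a multiplicative Hom-Lie superalgebra: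
    (∀ x y : V, al μ12 μ21 (br x y) = br (al μ12 μ21 x) (al μ12 μ21 y)) ∧
    (∀ (px py pz : Bool) (x y z : V), hom px x → hom py y → hom pz z →
      sg (px && pz) • br (al μ12 μ21 x) (br y z)
        + sg (py && px) • br (al μ12 μ21 y) (br z x)
        + sg (pz && py) • br (al μ12 μ21 z) (br x y) = 0) ∧
    -- (ii) ψ₀ is an even 1-cocycle which is not a coboundary …
    IsLin ψ0 ∧ IsEven ψ0 ∧
    (∀ x : V, al μ12 μ21 (ψ0 x) = ψ0 (al μ12 μ21 x)) ∧
    (∀ (px py : Bool) (x y : V), hom px x → hom py y → d1 ψ0 px py x y = 0) ∧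
    (¬ ∃ z : V, al μ12 μ21 z = z ∧ ∀ y : V, ψ0 y = D0 z y) ∧
    -- … and every even 1-cocycle is a multiple of ψ₀ plus a coboundary,
    -- hence dim H¹(g,g) = 1.
    (∀ ψ : V → V, IsLin ψ → IsEven ψ →
      (∀ x : V, al μ12 μ21 (ψ x) = ψ (al μ12 μ21 x)) →
      (∀ (px py : Bool) (x y : V), hom px x → hom py y → d1 ψ px py x y = 0) →
      ∃ (c : ℂ) (z : V), al μ12 μ21 z = z ∧ ∀ y : V, ψ y = c • ψ0 y + D0 z y) := by
  have hμ21 : μ21 ≠ 0 := right_ne_zero_of_mul h1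
  refine ⟨al_br μ12 μ21, fun px py pz x y z _ _ _ => hom_jacobi μ12 μ21 px py pz x y z,
    isLin_ψ0, isEven_ψ0, al_ψ0 μ12 μ21, isCocycle_ψ0,
    fun ⟨z, _, hz⟩ => ψ0_ne_D0 z (funext hz), fun ψ hlin heven hcomm hψ => ?_⟩
  refine ⟨ψ 𝐯₁ 1, 0, by simp [al], fun y => ?_⟩
  simpa [D0_zero] using congrFun (eq_smul_ψ0_of_isCocycle hμ21 hlin heven hcomm hψ) y

theorem stmt16 (μ12 μ21 : ℂ) (h1 : μ12 * μ21 ≠ 0) (h2 : μ12 * μ21 ≠ 1) :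
    -- (i) a multiplicative Hom-Lie superalgebra:
    (∀ x y : V, al μ12 μ21 (br x y) = br (al μ12 μ21 x) (al μ12 μ21 y)) ∧
    (∀ (px py pz : Bool) (x y z : V), hom px x → hom py y → hom pz z →
      sg (px && pz) • br (al μ12 μ21 x) (br y z)
        + sg (py && px) • br (al μ12 μ21 y) (br z x)
        + sg (pz && py) • br (al μ12 μ21 z) (br x y) = 0) ∧
    -- (ii) ψ₀ is an even 1-cocycle which is not a coboundary …
    IsLin ψ0 ∧ IsEven ψ0 ∧
    (∀ x : V, al μ12 μ21 (ψ0 x) = ψ0 (al μ12 μ21 x)) ∧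
    (∀ (px py : Bool) (x y : V), hom px x → hom py y → d1 ψ0 px py x y = 0) ∧
    (¬ ∃ z : V, al μ12 μ21 z = z ∧ ∀ y : V, ψ0 y = D0 z y) ∧
    -- … and every even 1-cocycle is a multiple of ψ₀ plus a coboundary,
    -- hence dim H¹(g,g) = 1.
    (∀ ψ : V → V, IsLin ψ → IsEven ψ →
      (∀ x : V, al μ12 μ21 (ψ x) = ψ (al μ12 μ21 x)) →
      (∀ (px py : Bool) (x y : V), hom px x → hom py y → d1 ψ px py x y = 0) →
      ∃ (c : ℂ) (z : V), al μ12 μ21 z = z ∧ ∀ y : V, ψ y = c • ψ0 y + D0 z y) :=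
  stmt16_general μ12 μ21 h1

end Stmt16
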